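/- With τ_k as in the Lawrence–Krammer-type representation, the assignment s_k ↦ τ_k extends to a monoid homomorphism from the positive Artin monoid B⁺ of type A, D, or E to End(V₀). -/

import Mathlib

/-!
The operators `τ_k` are restrictions of operators `T_k` on the free module over the whole root
lattice, given by the same formula without the positivity test: `T_k e_γ` is a combination of the
`e_{γ + j α_k}` with coefficients depending only on `a = (α_k, γ)`. Since `τ_k` corresponds to `T_k`
under the injective map `x_β ↦ e_β`, it suffices to check the braid relations for the `T_k` on
positive roots.

If `(α_k, α_l) = 0`, translating by `α_l` does not change `(α_k, ·)`, and `T_k`, `T_l` commute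
everywhere. If `(α_k, α_l) = -1`, both sides of `T_k T_l T_k e_γ = T_l T_k T_l e_γ` are determined by
`a` and `b = (α_l, γ)`, and the identity is a direct check as soon as `a`, `b` and `a + b` lie in
`[-1, 2]`. For a positive root `β` this holds because `a + b = (α_k + α_l, β)` and, by positive
definiteness, the inner product of two positive roots lies in `[-1, 2]`.
-/

/-- The fundamental root `α_i`, written in coordinates with respect to the basis of
fundamental roots. -/
def esingle {n : ℕ} (i : Fin n) : Fin n → ℤ := Pi.single i 1

/-- A finite crystallographic simply-laced root system (type `A`, `D` or `E`),
given by the Gram matrix `C` of the fundamental roots `α_1, …, α_n` (all of squared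
length 2):  `C i j = (α_i, α_j)`, which is `2` on the diagonal and `0` or `-1` off
the diagonal, and is positive definite.  Roots are coordinatized in the root
lattice `ℤⁿ`; the inner product is `ip`, and the positive roots are exactly the
lattice vectors of squared length `2` with nonnegative coordinates. -/
structure ADE (n : ℕ) where
  C : Matrix (Fin n) (Fin n) ℤ
  symm : ∀ i j, C i j = C j i
  diag : ∀ i, C i i = 2
  offdiag : ∀ i j, i ≠ j → C i j = 0 ∨ C i j = -1
  posdef : ∀ v : Fin n → ℤ, v ≠ 0 → 0 < ∑ i, ∑ j, v i * C i j * v j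

namespace ADE

variable {n : ℕ}

/-- The inner product `( , )` on the root lattice. -/
def ip (X : ADE n) (v w : Fin n → ℤ) : ℤ := ∑ i, ∑ j, v i * X.C i j * w j

/-- The set `Φ⁺` of positive roots: the lattice vectors of squared length `2`
all of whose coordinates (with respect to the fundamental roots) are nonnegative. -/
def Pos (X : ADE n) : Set (Fin n → ℤ) :=
  {β | β ≠ 0 ∧ (∀ j, 0 ≤ β j) ∧ X.ip β β = 2}

/-- The height `ht(β)`: the sum of the coefficients of `β` with respect to the
fundamental roots. -/
def htZ (β : Fin n → ℤ) : ℤ := ∑ j, β j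

end ADE

namespace ADE

variable {n : ℕ}

/-- The index type of the basis `{x_β : β ∈ Φ⁺}`. -/
abbrev PosIdx (X : ADE n) := {β : Fin n → ℤ // β ∈ X.Pos}

/-- The free module with basis `{x_β : β ∈ Φ⁺}` over a coefficient ring `A`. -/
abbrev LKMod (X : ADE n) (A : Type) [CommRing A] := ADE.PosIdx X →₀ A

/-- The basis vector `x_β`. -/
noncomputable def xv (X : ADE n) (A : Type) [CommRing A] (b : ADE.PosIdx X) :
    ADE.LKMod X A := Finsupp.single b 1

open scoped Classical in
/-- The linear map `τ_k` over a coefficient ring `A` with distinguished element `r`: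
`τ_k x_β = 0`, `r x_{β-α_k}`, `x_β`, or `(1 - r²) x_β + r x_{β+α_k}` according as
`(α_k, β) = 2, 1, 0, -1`. -/
noncomputable def tau (X : ADE n) (A : Type) [CommRing A] (r : A) (k : Fin n) :
    ADE.LKMod X A →ₗ[A] ADE.LKMod X A :=
  Finsupp.linearCombination A fun b : ADE.PosIdx X =>
    if X.ip (esingle k) b.1 = 2 then 0
    else if X.ip (esingle k) b.1 = 1 then
      (if h : b.1 - esingle k ∈ X.Pos then r • Finsupp.single ⟨b.1 - esingle k, h⟩ 1 else 0)
    else if X.ip (esingle k) b.1 = 0 then Finsupp.single b 1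
    else (1 - r ^ 2) • Finsupp.single b 1 +
      (if h : b.1 + esingle k ∈ X.Pos then r • Finsupp.single ⟨b.1 + esingle k, h⟩ 1 else 0)

end ADE

/-- The braid relations of the Artin monoid of simply-laced type:
`s_k s_l = s_l s_k` for nonadjacent `k, l` and `s_k s_l s_k = s_l s_k s_l` for
adjacent `k, l`. -/
inductive BraidRel {n : ℕ} (X : ADE n) : FreeMonoid (Fin n) → FreeMonoid (Fin n) → Prop
  | comm (k l : Fin n) : X.ip (esingle k) (esingle l) = 0 →
      BraidRel X (FreeMonoid.of k * FreeMonoid.of l) (FreeMonoid.of l * FreeMonoid.of k)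
  | braid (k l : Fin n) : X.ip (esingle k) (esingle l) = -1 →
      BraidRel X (FreeMonoid.of k * FreeMonoid.of l * FreeMonoid.of k)
        (FreeMonoid.of l * FreeMonoid.of k * FreeMonoid.of l)

/-- The positive Artin monoid `B⁺` of simply-laced type: the monoid presented by
generators `s_1, …, s_n` and the braid relations. -/
abbrev ArtinMonoid {n : ℕ} (X : ADE n) := (conGen (BraidRel X)).Quotient

namespace ADE

variable {n : ℕ} (X : ADE n)

lemma ip_comm (v w : Fin n → ℤ) : X.ip v w = X.ip w v := by
  unfold ip
  rw [Finset.sum_comm]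
  refine Finset.sum_congr rfl fun i _ => Finset.sum_congr rfl fun j _ => ?_
  rw [X.symm]
  ring

@[simp]
lemma ip_add_left (u v w : Fin n → ℤ) : X.ip (u + v) w = X.ip u w + X.ip v w := by
  simp only [ip, Pi.add_apply, add_mul, Finset.sum_add_distrib]

@[simp]
lemma ip_sub_left (u v w : Fin n → ℤ) : X.ip (u - v) w = X.ip u w - X.ip v w := by
  simp only [ip, Pi.sub_apply, sub_mul, Finset.sum_sub_distrib]

@[simp]
lemma ip_smul_left (a : ℤ) (v w : Fin n → ℤ) : X.ip (a • v) w = a * X.ip v w := by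
  simp only [ip, Pi.smul_apply, smul_eq_mul, Finset.mul_sum, mul_assoc]

@[simp]
lemma ip_neg_left (v w : Fin n → ℤ) : X.ip (-v) w = -X.ip v w := by
  simpa using X.ip_smul_left (-1) v w

@[simp]
lemma ip_zero_left (v : Fin n → ℤ) : X.ip 0 v = 0 := by
  simp [ip]

@[simp]
lemma ip_add_right (u v w : Fin n → ℤ) : X.ip u (v + w) = X.ip u v + X.ip u w := by
  rw [ip_comm, ip_add_left, ip_comm X v, ip_comm X w]

@[simp]
lemma ip_sub_right (u v w : Fin n → ℤ) : X.ip u (v - w) = X.ip u v - X.ip u w := by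
  rw [ip_comm, ip_sub_left, ip_comm X v, ip_comm X w]

@[simp]
lemma ip_smul_right (a : ℤ) (v w : Fin n → ℤ) : X.ip v (a • w) = a * X.ip v w := by
  rw [ip_comm, ip_smul_left, ip_comm]

@[simp]
lemma ip_neg_right (v w : Fin n → ℤ) : X.ip v (-w) = -X.ip v w := by
  rw [ip_comm, ip_neg_left, ip_comm]

@[simp]
lemma ip_esingle_esingle (k l : Fin n) : X.ip (esingle k) (esingle l) = X.C k l := by
  simp [ip, esingle, Pi.single_apply]

lemma eq_zero_of_ip_self_eq_zero {v : Fin n → ℤ} (h : X.ip v v = 0) : v = 0 := by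
  by_contra hv
  exact (X.posdef v hv).ne' h

lemma ip_self_nonneg (v : Fin n → ℤ) : 0 ≤ X.ip v v := by
  rcases eq_or_ne v 0 with rfl | hv
  · simp
  · exact (X.posdef v hv).le

lemma even_ip_self (v : Fin n → ℤ) : Even (X.ip v v) := by
  -- `C = U + Uᵀ` for the upper triangular `U` with ones on the diagonal
  set U : Fin n → Fin n → ℤ := fun i j => if i < j then X.C i j else if i = j then 1 else 0
  have hC : ∀ i j, X.C i j = U i j + U j i := by
    intro i j
    rcases lt_trichotomy i j with h | rfl | h
    · simp [U, h, h.not_gt, h.ne']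
    · simp [U, X.diag]
    · simp [U, h, h.not_gt, h.ne', X.symm i j]
  refine ⟨∑ i, ∑ j, v i * U i j * v j, ?_⟩
  simp only [ip, hC, mul_add, add_mul, Finset.sum_add_distrib]
  congr 1
  rw [Finset.sum_comm]
  exact Finset.sum_congr rfl fun i _ => Finset.sum_congr rfl fun j _ => by ring

lemma two_le_ip_self {v : Fin n → ℤ} (hv : v ≠ 0) : 2 ≤ X.ip v v := by
  obtain ⟨m, hm⟩ := X.even_ip_self v
  have : 0 < X.ip v v := X.posdef v hv
  omega

lemma ip_nonpos_of_disjoint {p m : Fin n → ℤ} (hp : ∀ i, 0 ≤ p i) (hm : ∀ i, 0 ≤ m i)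
    (hpm : ∀ i, p i = 0 ∨ m i = 0) : X.ip p m ≤ 0 := by
  refine Finset.sum_nonpos fun i _ => Finset.sum_nonpos fun j _ => ?_
  by_cases hij : i = j
  · subst hij
    rcases hpm i with h | h <;> simp [h]
  · rcases X.offdiag i j hij with h | h
    · simp [h]
    · rw [h]
      nlinarith [hp i, hm j]

lemma nonneg_or_nonpos_of_ip_self_eq_two {v : Fin n → ℤ} (hv : X.ip v v = 2) :
    (∀ i, 0 ≤ v i) ∨ (∀ i, v i ≤ 0) := by
  -- otherwise the positive and negative parts `p`, `m` of `v` are nonzero with `(p, m) ≤ 0`,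
  -- so `(v, v) ≥ 4`
  by_contra h
  simp only [not_or, not_forall, not_le] at h
  obtain ⟨⟨j₁, hj₁⟩, ⟨j₂, hj₂⟩⟩ := h
  set p : Fin n → ℤ := fun i => max (v i) 0
  set m : Fin n → ℤ := fun i => max (-v i) 0
  have hp : p ≠ 0 := fun h => by have := congrFun h j₂; simp [p] at this; omega
  have hm : m ≠ 0 := fun h => by have := congrFun h j₁; simp [m] at this; omega
  have hpm : X.ip p m ≤ 0 :=
    X.ip_nonpos_of_disjoint (fun i => le_max_right _ _) (fun i => le_max_right _ _)
      fun i => by simp only [p, m]; omega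
  have hvpm : v = p - m := by ext i; simp only [p, m, Pi.sub_apply]; omega
  have := X.two_le_ip_self hp
  have := X.two_le_ip_self hm
  rw [hvpm, ip_sub_left, ip_sub_right, ip_sub_right, X.ip_comm m p] at hv
  omega

lemma ip_le_two {γ β : Fin n → ℤ} (hγ : X.ip γ γ = 2) (hβ : X.ip β β = 2) : X.ip γ β ≤ 2 := by
  have := X.ip_self_nonneg (β - γ)
  simp only [ip_sub_left, ip_sub_right, hγ, hβ, X.ip_comm β γ] at this
  omega

lemma eq_of_ip_eq_two {γ β : Fin n → ℤ} (hγ : X.ip γ γ = 2) (hβ : X.ip β β = 2)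
    (h : X.ip γ β = 2) : β = γ :=
  sub_eq_zero.mp <| X.eq_zero_of_ip_self_eq_zero <| by simp [hγ, hβ, X.ip_comm β γ, h]

lemma neg_one_le_ip {γ β : Fin n → ℤ} (hγ : γ ∈ X.Pos) (hβ : β ∈ X.Pos) : -1 ≤ X.ip γ β := by
  -- `(-γ, β) ≤ 2`, with equality only if `β = -γ`, which cannot be positive
  have h2 : X.ip (-γ) (-γ) = 2 := by simp [hγ.2.2]
  have hle := X.ip_le_two h2 hβ.2.2
  by_contra hlt
  have hβγ : β = -γ := X.eq_of_ip_eq_two h2 hβ.2.2 (by simp at hle ⊢; omega)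
  refine hγ.1 (funext fun j => ?_)
  have := hγ.2.1 j
  have := hβ.2.1 j
  simp only [hβγ, Pi.neg_apply] at this
  simp only [Pi.zero_apply]
  omega

lemma ip_mem_Icc {γ β : Fin n → ℤ} (hγ : γ ∈ X.Pos) (hβ : β ∈ X.Pos) :
    X.ip γ β ∈ Set.Icc (-1) 2 :=
  ⟨X.neg_one_le_ip hγ hβ, X.ip_le_two hγ.2.2 hβ.2.2⟩

lemma esingle_mem_pos (k : Fin n) : esingle k ∈ X.Pos :=
  ⟨fun h => by simpa [esingle] using congrFun h k,
    fun j => by simp only [esingle, Pi.single_apply]; split <;> omega,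
    by rw [ip_esingle_esingle, X.diag]⟩

lemma add_esingle_mem_pos {k : Fin n} {β : Fin n → ℤ} (hβ : β ∈ X.Pos)
    (h : X.ip (esingle k) β = -1) : β + esingle k ∈ X.Pos := by
  obtain ⟨-, hnn, h2⟩ := hβ
  refine ⟨fun h0 => ?_, fun j => add_nonneg (hnn j) ((X.esingle_mem_pos k).2.1 j), ?_⟩
  · have := congrFun h0 k
    have := hnn k
    simp [esingle] at *
    omega
  · simp [X.diag, h2, X.ip_comm β, h]

lemma sub_esingle_mem_pos {k : Fin n} {β : Fin n → ℤ} (hβ : β ∈ X.Pos)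
    (h : X.ip (esingle k) β = 1) : β - esingle k ∈ X.Pos := by
  obtain ⟨-, hnn, h2⟩ := hβ
  have hmul : ∀ c : ℤ, β ≠ c • esingle k := by
    rintro c rfl
    simp only [ip_smul_right, ip_esingle_esingle, X.diag] at h
    omega
  have h2' : X.ip (β - esingle k) (β - esingle k) = 2 := by
    simp [X.diag, h2, X.ip_comm β, h]
  refine ⟨sub_ne_zero.mpr (by simpa using hmul 1), ?_, h2'⟩
  -- a root `β - α_k ≤ 0` with `β ≥ 0` forces `β` to be a multiple of `α_k`
  refine (X.nonneg_or_nonpos_of_ip_self_eq_two h2').resolve_right fun hle => hmul (β k) ?_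
  ext j
  have := hle j
  have := hnn j
  by_cases hj : j = k
  · subst hj
    simp [esingle]
  · simp only [esingle, Pi.sub_apply, Pi.smul_apply, Pi.single_apply, hj, if_false,
      smul_zero, sub_zero] at *
    omega

variable (A : Type) [CommRing A] (r : A)

/-- `τ_k` on the free module over the whole root lattice, without the positivity test. -/
noncomputable def tauLattice (k : Fin n) : ((Fin n → ℤ) →₀ A) →ₗ[A] ((Fin n → ℤ) →₀ A) :=
  Finsupp.linearCombination A fun γ =>
    if X.ip (esingle k) γ = 2 then 0
    else if X.ip (esingle k) γ = 1 then r • Finsupp.single (γ - esingle k) 1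
    else if X.ip (esingle k) γ = 0 then Finsupp.single γ 1
    else (1 - r ^ 2) • Finsupp.single γ 1 + r • Finsupp.single (γ + esingle k) 1

lemma tauLattice_single (k : Fin n) (γ : Fin n → ℤ) :
    X.tauLattice A r k (Finsupp.single γ 1) =
      if X.ip (esingle k) γ = 2 then 0
      else if X.ip (esingle k) γ = 1 then r • Finsupp.single (γ - esingle k) 1
      else if X.ip (esingle k) γ = 0 then Finsupp.single γ 1
      else (1 - r ^ 2) • Finsupp.single γ 1 + r • Finsupp.single (γ + esingle k) 1 := by
  simp [tauLattice]

lemma tauLattice_comm {k l : Fin n} (hkl : X.C k l = 0) :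
    X.tauLattice A r k ∘ₗ X.tauLattice A r l = X.tauLattice A r l ∘ₗ X.tauLattice A r k := by
  have hlk : X.C l k = 0 := X.symm l k ▸ hkl
  ext γ : 2
  simp only [LinearMap.comp_apply, Finsupp.lsingle_apply, tauLattice_single]
  split_ifs <;>
    simp only [map_add, map_smul, map_zero, tauLattice_single, ip_add_right, ip_sub_right,
      ip_esingle_esingle, hkl, hlk, add_zero, sub_zero] <;>
    norm_num only [*, if_true, if_false] <;>
    (try simp only [sub_right_comm _ (esingle k), add_right_comm _ (esingle k),
      sub_add_eq_add_sub]) <;>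
    module

/-- Under these bounds every pairing with `α_k` or `α_l` met along the computation stays in
`[-1, 2]`, so the last branch of `tauLattice` is only reached at `-1`. -/
lemma tauLattice_braid_single {k l : Fin n} (hkl : X.C k l = -1) {γ : Fin n → ℤ}
    (ha : X.ip (esingle k) γ ∈ Set.Icc (-1) 2) (hb : X.ip (esingle l) γ ∈ Set.Icc (-1) 2)
    (hab : X.ip (esingle k) γ + X.ip (esingle l) γ ∈ Set.Icc (-1) 2) :
    X.tauLattice A r k (X.tauLattice A r l (X.tauLattice A r k (Finsupp.single γ 1))) =
      X.tauLattice A r l (X.tauLattice A r k (X.tauLattice A r l (Finsupp.single γ 1))) := by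
  have hlk : X.C l k = -1 := X.symm l k ▸ hkl
  simp only [Set.mem_Icc] at ha hb hab
  obtain ha | ha | ha | ha : X.ip (esingle k) γ = -1 ∨ X.ip (esingle k) γ = 0 ∨
      X.ip (esingle k) γ = 1 ∨ X.ip (esingle k) γ = 2 := by omega
  all_goals
    obtain hb | hb | hb | hb : X.ip (esingle l) γ = -1 ∨ X.ip (esingle l) γ = 0 ∨
        X.ip (esingle l) γ = 1 ∨ X.ip (esingle l) γ = 2 := by omega
  all_goals try omega
  all_goals
    norm_num only [tauLattice_single, map_add, map_smul, map_zero, smul_zero, add_zero,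
      ip_add_right, ip_sub_right, ip_esingle_esingle, hkl, hlk, X.diag, ha, hb, if_true, if_false,
      add_sub_cancel_right, sub_add_cancel] <;>
    (try simp only [add_right_comm _ (esingle k)]) <;>
    module

lemma tauLattice_comp_lmapDomain (k : Fin n) :
    X.tauLattice A r k ∘ₗ Finsupp.lmapDomain A A Subtype.val =
      Finsupp.lmapDomain A A Subtype.val ∘ₗ X.tau A r k := by
  ext ⟨β, hβ⟩ : 2
  have hk := X.ip_mem_Icc (X.esingle_mem_pos k) hβ
  simp only [Set.mem_Icc] at hk
  simp only [LinearMap.comp_apply, Finsupp.lsingle_apply, Finsupp.lmapDomain_apply,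
    Finsupp.mapDomain_single, tauLattice_single, tau, Finsupp.linearCombination_single, one_smul]
  split_ifs with h2 h1 hsub h0 hadd
  · simp
  · simp only [Finsupp.mapDomain_smul, Finsupp.mapDomain_single]
  · exact absurd (X.sub_esingle_mem_pos hβ h1) hsub
  · simp
  · simp only [Finsupp.mapDomain_add, Finsupp.mapDomain_smul, Finsupp.mapDomain_single]
  · exact absurd (X.add_esingle_mem_pos hβ (by omega)) hadd

lemma lmapDomain_comp_lift_tau (w : FreeMonoid (Fin n)) :
    Finsupp.lmapDomain A A Subtype.val ∘ₗ FreeMonoid.lift (X.tau A r) w =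
      FreeMonoid.lift (X.tauLattice A r) w ∘ₗ Finsupp.lmapDomain A A Subtype.val := by
  induction w using FreeMonoid.inductionOn' with
  | one => rfl
  | of_mul k w ih =>
    simp only [map_mul, FreeMonoid.lift_eval_of, Module.End.mul_eq_comp, ← LinearMap.comp_assoc,
      ← X.tauLattice_comp_lmapDomain]
    rw [LinearMap.comp_assoc, ih, LinearMap.comp_assoc]

lemma lift_tauLattice_single_eq_of_braidRel {w w' : FreeMonoid (Fin n)} (h : BraidRel X w w')
    {β : Fin n → ℤ} (hβ : β ∈ X.Pos) :
    FreeMonoid.lift (X.tauLattice A r) w (Finsupp.single β 1) =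
      FreeMonoid.lift (X.tauLattice A r) w' (Finsupp.single β 1) := by
  cases h with
  | comm k l hkl =>
    simp only [map_mul, FreeMonoid.lift_eval_of, Module.End.mul_eq_comp]
    rw [X.tauLattice_comm A r (by rwa [ip_esingle_esingle] at hkl)]
  | braid k l hkl =>
    have hα : esingle k + esingle l ∈ X.Pos :=
      add_comm (esingle l) (esingle k) ▸ X.add_esingle_mem_pos (X.esingle_mem_pos l) hkl
    simpa only [map_mul, FreeMonoid.lift_eval_of, Module.End.mul_apply] using
      X.tauLattice_braid_single A r (by rwa [ip_esingle_esingle] at hkl)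
        (X.ip_mem_Icc (X.esingle_mem_pos k) hβ) (X.ip_mem_Icc (X.esingle_mem_pos l) hβ)
        (by simpa using X.ip_mem_Icc hα hβ)

lemma lift_tau_eq_of_braidRel {w w' : FreeMonoid (Fin n)} (h : BraidRel X w w') :
    FreeMonoid.lift (X.tau A r) w = FreeMonoid.lift (X.tau A r) w' := by
  rw [← LinearMap.cancel_left (f := Finsupp.lmapDomain A A Subtype.val)
    (Finsupp.mapDomain_injective Subtype.val_injective),
    lmapDomain_comp_lift_tau, lmapDomain_comp_lift_tau]
  ext ⟨β, hβ⟩ : 2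
  simpa using X.lift_tauLattice_single_eq_of_braidRel A r h hβ

end ADE

/-- The assignment `s_k ↦ τ_k` extends to a monoid homomorphism from the positive
Artin monoid `B⁺` of type `A`, `D` or `E` to `End(V₀)`. -/
theorem exists_monoidHom_tau {n : ℕ} (X : ADE n) :
    ∃ φ : ArtinMonoid X →* Module.End (Polynomial ℤ) (ADE.LKMod X (Polynomial ℤ)),
      ∀ k : Fin n,
        φ (Con.mk' (conGen (BraidRel X)) (FreeMonoid.of k)) =
          ADE.tau X (Polynomial ℤ) Polynomial.X k := by
  refine ⟨(conGen (BraidRel X)).lift (FreeMonoid.lift (X.tau (Polynomial ℤ) Polynomial.X))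
    (Con.conGen_le.mpr fun w w' h => (Con.ker_rel _).mpr ?_), fun k => ?_⟩
  · exact X.lift_tau_eq_of_braidRel _ _ h
  · rw [Con.lift_mk', FreeMonoid.lift_eval_of]
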